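/- Let U be a random vector in ℝ^q and V a random vector in ℝ^q on the same probability space, and let 𝕍 be a symmetric positive definite q×q matrix. Suppose that for all a, η ∈ ℝ^q, 𝔼[exp(i⟨a, U⟩ + ⟨η, V⟩ − ½ ηᵀ𝕍⁻¹η)] = exp(i⟨a, η⟩)·𝔼[exp(i⟨a, U⟩)] (with all expectations finite). Then for every a ∈ ℝ^q, 𝔼[exp(i⟨a, U⟩)] = 𝔼[exp(i⟨a, U − 𝕍V⟩)]·exp(−½ aᵀ𝕍a). In particular, the law of U is the convolution of the law of U − 𝕍V with the Gaussian law N(0, 𝕍). -/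

import Mathlib

/-!
Fix `a`, put `b = 𝕍ᵀ a`, `c = aᵀ 𝕍 a` and `X = ⟨b, V⟩`. Taking `η = t b` in the hypothesis gives,
for real `t`, `𝔼[e^{i⟨a,U⟩} e^{tX}] = e^{itc + t²c/2} 𝔼[e^{i⟨a,U⟩}]`. Since `e^{tX}` is integrable
for every real `t`, the left side is an entire function of `t`, so the identity persists for
complex `t`; at `t = -i` it is the claim.
-/

open Matrix MeasureTheory Complex ProbabilityTheory Topology

theorem Differentiable.eq_of_forall_ofReal_eq {f g : ℂ → ℂ} (hf : Differentiable ℂ f)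
    (hg : Differentiable ℂ g) (hfg : ∀ x : ℝ, f x = g x) : f = g := by
  have hreal : Filter.Tendsto ((↑) : ℝ → ℂ) (𝓝[≠] 0) (𝓝[≠] 0) := by
    simpa using continuous_ofReal.continuousWithinAt.tendsto_nhdsWithin (x := (0 : ℝ))
      (t := {0}ᶜ) fun x hx ↦ by simpa using hx
  exact AnalyticOnNhd.eq_of_frequently_eq (fun z _ ↦ hf.analyticAt z) (fun z _ ↦ hg.analyticAt z)
    (hreal.frequently (.of_forall hfg))

theorem Matrix.vecMul_dotProduct_inv_mulVec_vecMul {n R : Type*} [Fintype n] [DecidableEq n]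
    [CommRing R] {M : Matrix n n R} (hM : IsUnit M.det) (a : n → R) :
    (a ᵥ* M) ⬝ᵥ M⁻¹ *ᵥ (a ᵥ* M) = a ⬝ᵥ M *ᵥ a := by
  rw [dotProduct_mulVec, vecMul_vecMul, mul_nonsing_inv _ hM, vecMul_one, dotProduct_comm,
    dotProduct_mulVec]

section WeightedMGF

variable {Ω : Type*} [MeasurableSpace Ω] {μ : Measure Ω} {f : Ω → ℂ} {X : Ω → ℝ} {C : ℝ}

theorem differentiable_integral_mul_cexp_mul (hf : AEStronglyMeasurable f μ)
    (hfC : ∀ᵐ ω ∂μ, ‖f ω‖ ≤ C) (hX : ∀ t : ℝ, Integrable (fun ω ↦ Real.exp (t * X ω)) μ) :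
    Differentiable ℂ (fun z : ℂ ↦ ∫ ω, f ω * cexp (z * X ω) ∂μ) := by
  have hXm : AEMeasurable X μ := aemeasurable_of_integrable_exp_mul zero_ne_one (hX 0) (hX 1)
  intro z
  refine (hasDerivAt_integral_of_dominated_loc_of_deriv_le
    (F' := fun z ω ↦ f ω * (X ω * cexp (z * X ω)))
    (bound := fun ω ↦ C * (|X ω| ^ 1 * Real.exp (z.re * X ω + 2⁻¹ * |X ω|)))
    (Metric.ball_mem_nhds z (by norm_num : (0 : ℝ) < 2⁻¹)) ?_ ?_ ?_ ?_ ?_ ?_).2.differentiableAt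
  · exact .of_forall fun z ↦ hf.mul (by fun_prop)
  · exact (integrable_cexp_mul_of_re_mem_integrableExpSet hXm (hX z.re)).bdd_mul hf hfC
  · exact hf.mul (by fun_prop)
  · filter_upwards [hfC] with ω hω ε hε
    have hre : ε.re * X ω ≤ z.re * X ω + 2⁻¹ * |X ω| := by
      have : |(ε - z).re| < 2⁻¹ :=
        (abs_re_le_norm _).trans_lt (by simpa [dist_eq_norm] using hε)
      nlinarith [abs_le.mp this.le, abs_mul_abs_self (X ω), le_abs_self (X ω), neg_abs_le (X ω),
        sub_re ε z]
    rw [norm_mul, norm_mul, norm_exp, pow_one, norm_real, Real.norm_eq_abs]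
    simp only [mul_re, ofReal_re, ofReal_im, mul_zero, sub_zero]
    gcongr
    exact (norm_nonneg _).trans hω
  · exact (integrable_pow_abs_mul_exp_add_of_integrable_exp_mul (t := 1) (hX _) (hX _)
      (by norm_num) (by norm_num) 1).const_mul C
  · refine .of_forall fun ω ε _ ↦ ?_
    exact (((hasDerivAt_id ε).mul_const (X ω : ℂ)).cexp.const_mul (f ω)).congr_deriv
      (by simp only [id, one_mul]; ring)

theorem integral_mul_cexp_mul_eq_of_forall_ofReal {G : ℂ → ℂ} (hG : Differentiable ℂ G)
    (hf : AEStronglyMeasurable f μ) (hfC : ∀ᵐ ω ∂μ, ‖f ω‖ ≤ C)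
    (hX : ∀ t : ℝ, Integrable (fun ω ↦ Real.exp (t * X ω)) μ)
    (hfXG : ∀ t : ℝ, ∫ ω, f ω * cexp (t * X ω) ∂μ = G t) (z : ℂ) :
    ∫ ω, f ω * cexp (z * X ω) ∂μ = G z :=
  congrFun (Differentiable.eq_of_forall_ofReal_eq
    (differentiable_integral_mul_cexp_mul hf hfC hX) hG hfXG) z

end WeightedMGF

theorem cexp_add_smul_vecMul_sub_quadratic {n : Type*} [Fintype n] [DecidableEq n]
    {M : Matrix n n ℝ} (hM : IsUnit M.det) (a u v : n → ℝ) (t : ℝ) :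
    cexp (I * (a ⬝ᵥ u : ℝ) + ((t • (a ᵥ* M)) ⬝ᵥ v : ℝ)
        - 1 / 2 * ((t • (a ᵥ* M)) ⬝ᵥ M⁻¹ *ᵥ (t • (a ᵥ* M)) : ℝ))
      = cexp (-(t ^ 2 * (a ⬝ᵥ M *ᵥ a : ℝ) / 2))
          * (cexp (I * (a ⬝ᵥ u : ℝ)) * cexp (t * ((a ᵥ* M) ⬝ᵥ v : ℝ))) := by
  simp only [mulVec_smul, smul_dotProduct, dotProduct_smul, smul_eq_mul,
    vecMul_dotProduct_inv_mulVec_vecMul hM]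
  rw [← exp_add, ← exp_add]
  push_cast
  ring_nf

section Reduction

variable {Ω : Type*} [MeasurableSpace Ω] {P : Measure Ω} {q : ℕ} {U V : Ω → Fin q → ℝ}
  {𝕍 : Matrix (Fin q) (Fin q) ℝ}

theorem integrable_exp_mul_vecMul_dotProduct (h𝕍 : IsUnit 𝕍.det) (a : Fin q → ℝ)
    (hint : ∀ η : Fin q → ℝ, Integrable (fun ω ↦ cexp (I * (a ⬝ᵥ U ω : ℝ) + (η ⬝ᵥ V ω : ℝ)
      - 1 / 2 * (η ⬝ᵥ 𝕍⁻¹ *ᵥ η : ℝ))) P) (t : ℝ) :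
    Integrable (fun ω ↦ Real.exp (t * ((a ᵥ* 𝕍) ⬝ᵥ V ω))) P := by
  refine ((hint (t • (a ᵥ* 𝕍))).norm.const_mul (Real.exp (t ^ 2 * (a ⬝ᵥ 𝕍 *ᵥ a) / 2))).congr
    (.of_forall fun ω ↦ ?_)
  simp only [cexp_add_smul_vecMul_sub_quadratic h𝕍]
  simp [norm_exp, ← Real.exp_add, ← ofReal_pow]

theorem integral_mul_cexp_vecMul_dotProduct (h𝕍 : IsUnit 𝕍.det) (a : Fin q → ℝ)
    (hchar : ∀ η : Fin q → ℝ,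
      ∫ ω, cexp (I * (a ⬝ᵥ U ω : ℝ) + (η ⬝ᵥ V ω : ℝ) - 1 / 2 * (η ⬝ᵥ 𝕍⁻¹ *ᵥ η : ℝ)) ∂P
        = cexp (I * (a ⬝ᵥ η : ℝ)) * ∫ ω, cexp (I * (a ⬝ᵥ U ω : ℝ)) ∂P) (t : ℝ) :
    ∫ ω, cexp (I * (a ⬝ᵥ U ω : ℝ)) * cexp (t * ((a ᵥ* 𝕍) ⬝ᵥ V ω : ℝ)) ∂P
      = cexp (I * t * (a ⬝ᵥ 𝕍 *ᵥ a : ℝ) + t ^ 2 * (a ⬝ᵥ 𝕍 *ᵥ a : ℝ) / 2)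
          * ∫ ω, cexp (I * (a ⬝ᵥ U ω : ℝ)) ∂P := by
  have h := hchar (t • (a ᵥ* 𝕍))
  rw [dotProduct_smul, smul_eq_mul, dotProduct_comm a, ← dotProduct_mulVec] at h
  simp only [cexp_add_smul_vecMul_sub_quadratic h𝕍, integral_const_mul] at h
  refine (mul_right_inj' (exp_ne_zero (-((t : ℂ) ^ 2 * (a ⬝ᵥ 𝕍 *ᵥ a : ℝ) / 2)))).mp ?_
  rw [h, ← mul_assoc, ← exp_add]
  congr 2
  push_cast
  ring

end Reduction

theorem stmt8_general {Ω : Type*} [MeasurableSpace Ω] (P : Measure Ω)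
    (q : ℕ)
    (U V : Ω → (Fin q → ℝ)) (𝕍 : Matrix (Fin q) (Fin q) ℝ)
    (h𝕍 : 𝕍.PosDef)
    (hint : ∀ a η : Fin q → ℝ, Integrable (fun ω : Ω =>
      Complex.exp (Complex.I * (a ⬝ᵥ U ω : ℝ) + (η ⬝ᵥ V ω : ℝ)
        - ((1 : ℂ) / 2) * (η ⬝ᵥ 𝕍⁻¹.mulVec η : ℝ))) P)
    (hchar : ∀ a η : Fin q → ℝ,
      ∫ ω : Ω, Complex.exp (Complex.I * (a ⬝ᵥ U ω : ℝ) + (η ⬝ᵥ V ω : ℝ)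
          - ((1 : ℂ) / 2) * (η ⬝ᵥ 𝕍⁻¹.mulVec η : ℝ)) ∂P
        = Complex.exp (Complex.I * (a ⬝ᵥ η : ℝ))
            * ∫ ω : Ω, Complex.exp (Complex.I * (a ⬝ᵥ U ω : ℝ)) ∂P) :
    ∀ a : Fin q → ℝ,
      ∫ ω : Ω, Complex.exp (Complex.I * (a ⬝ᵥ U ω : ℝ)) ∂P
        = (∫ ω : Ω, Complex.exp (Complex.I * (a ⬝ᵥ (U ω - 𝕍.mulVec (V ω)) : ℝ)) ∂P)
            * Complex.exp (-((1 : ℂ) / 2) * (a ⬝ᵥ 𝕍.mulVec a : ℝ)) := by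
  intro a
  have hdet : IsUnit 𝕍.det := h𝕍.det_pos.ne'.isUnit
  set c : ℝ := a ⬝ᵥ 𝕍 *ᵥ a
  have hcont := integral_mul_cexp_mul_eq_of_forall_ofReal (C := 1)
    (G := fun z ↦ cexp (I * z * c + z ^ 2 * c / 2) * ∫ ω, cexp (I * (a ⬝ᵥ U ω : ℝ)) ∂P)
    (by fun_prop) (by simpa using (hint a 0).aestronglyMeasurable)
    (.of_forall fun ω ↦ by simp [norm_exp]) (integrable_exp_mul_vecMul_dotProduct hdet a (hint a))
    (integral_mul_cexp_vecMul_dotProduct hdet a (hchar a)) (-I)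
  have hshift (ω : Ω) : cexp (I * (a ⬝ᵥ (U ω - 𝕍 *ᵥ V ω) : ℝ))
      = cexp (I * (a ⬝ᵥ U ω : ℝ)) * cexp (-I * ((a ᵥ* 𝕍) ⬝ᵥ V ω : ℝ)) := by
    rw [dotProduct_sub, dotProduct_mulVec, ← exp_add]
    push_cast
    ring_nf
  have hexp : I * -I * c + (-I) ^ 2 * c / 2 + -(1 / 2) * c = 0 := by
    linear_combination (-(c : ℂ) / 2) * I_sq
  simp_rw [hshift, hcont, mul_right_comm _ (∫ _, _ ∂P), ← exp_add, hexp, exp_zero, one_mul]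

/-- Algebraic core of the Hájek–Le Cam convolution theorem: if the joint
characteristic-function identity
`𝔼[exp(i⟨a,U⟩ + ⟨η,V⟩ − ½ ηᵀ𝕍⁻¹η)] = exp(i⟨a,η⟩) 𝔼[exp(i⟨a,U⟩)]` holds for all
`a, η ∈ ℝ^q`, then `𝔼[exp(i⟨a,U⟩)] = 𝔼[exp(i⟨a, U − 𝕍V⟩)] · exp(−½ aᵀ𝕍a)`. -/
theorem stmt8 {Ω : Type*} [MeasurableSpace Ω] (P : Measure Ω)
    [IsProbabilityMeasure P] (q : ℕ)
    (U V : Ω → (Fin q → ℝ)) (𝕍 : Matrix (Fin q) (Fin q) ℝ)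
    (h𝕍 : 𝕍.PosDef) (h𝕍symm : 𝕍.IsSymm)
    (hint : ∀ a η : Fin q → ℝ, Integrable (fun ω : Ω =>
      Complex.exp (Complex.I * (a ⬝ᵥ U ω : ℝ) + (η ⬝ᵥ V ω : ℝ)
        - ((1 : ℂ) / 2) * (η ⬝ᵥ 𝕍⁻¹.mulVec η : ℝ))) P)
    (hchar : ∀ a η : Fin q → ℝ,
      ∫ ω : Ω, Complex.exp (Complex.I * (a ⬝ᵥ U ω : ℝ) + (η ⬝ᵥ V ω : ℝ)
          - ((1 : ℂ) / 2) * (η ⬝ᵥ 𝕍⁻¹.mulVec η : ℝ)) ∂P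
        = Complex.exp (Complex.I * (a ⬝ᵥ η : ℝ))
            * ∫ ω : Ω, Complex.exp (Complex.I * (a ⬝ᵥ U ω : ℝ)) ∂P) :
    ∀ a : Fin q → ℝ,
      ∫ ω : Ω, Complex.exp (Complex.I * (a ⬝ᵥ U ω : ℝ)) ∂P
        = (∫ ω : Ω, Complex.exp (Complex.I * (a ⬝ᵥ (U ω - 𝕍.mulVec (V ω)) : ℝ)) ∂P)
            * Complex.exp (-((1 : ℂ) / 2) * (a ⬝ᵥ 𝕍.mulVec a : ℝ)) :=
  stmt8_general P q U V 𝕍 h𝕍 hint hchar
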